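/- arXiv:1707.04609 — 5 statements merged into one kernel-verified Lean document; each statement's English description precedes it below -/
import Mathlib

section
/- Let G be a bipartite graph with parts U and V, let ξ ∈ (0,1), let X ⊆ V be nonempty, and let S be a ξ-core of X. If S is a ξ-witness (i.e., S = ∅ or |S| ≥ 24/ξ²), then X is ξ-balanced. -/
/-! Every vertex of `X` has degree at most `|U_X|`. If the core is empty, (W1) gives the sharper
bound `ξ|U_X|`. Otherwise the at least `24/ξ²` vertices of the core each have degree at least
`ξ|U_X|/24`, so `e(X) ≥ |U_X|/ξ`. Either way the degree is at most `ξ e(X)`. -/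

/-- Number of edges of the bipartite graph `E ⊆ U × V` incident to a set `X ⊆ V`. -/
def eInc {U V : Type} [DecidableEq U] [DecidableEq V] (E : Finset (U × V)) (X : Finset V) : ℕ :=
  (E.filter (fun p => p.2 ∈ X)).card

/-- Degree of a vertex `v ∈ V` in the bipartite graph `E ⊆ U × V`. -/
def bideg {U V : Type} [DecidableEq U] [DecidableEq V] (E : Finset (U × V)) (v : V) : ℕ :=
  (E.filter (fun p => p.2 = v)).card

/-- `U_X`: the set of vertices of `U` having a neighbour in `X`. -/
def UX {U V : Type} [Fintype U] [DecidableEq U] [DecidableEq V] (E : Finset (U × V))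
    (X : Finset V) : Finset U :=
  Finset.univ.filter (fun u => ∃ v ∈ X, (u, v) ∈ E)

/-- `S` is a `ξ`-core of `X`: `S ⊆ X`, every vertex of `X` of degree at least `ξ|U_X|`
belongs to `S`, and every vertex of `S` has degree at least `ξ|U_X|/24`. -/
def IsCore {U V : Type} [Fintype U] [DecidableEq U] [DecidableEq V] (E : Finset (U × V))
    (X S : Finset V) (ξ : ℝ) : Prop :=
  S ⊆ X ∧ (∀ v ∈ X, ξ * ((UX E X).card : ℝ) ≤ (bideg E v : ℝ) → v ∈ S) ∧
    (∀ v ∈ S, ξ * ((UX E X).card : ℝ) / 24 ≤ (bideg E v : ℝ))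

open Finset

section Bipartite

variable {U V : Type} [DecidableEq U] [DecidableEq V] (E : Finset (U × V))

lemma eInc_eq_sum_bideg (S : Finset V) : eInc E S = ∑ v ∈ S, bideg E v := by
  have hmaps : ((E.filter fun p => p.2 ∈ S : Finset (U × V)) : Set (U × V)).MapsTo Prod.snd S :=
    fun p hp => (mem_filter.mp hp).2
  rw [eInc, card_eq_sum_card_fiberwise hmaps]
  refine sum_congr rfl fun v hv => congrArg card ?_
  ext p
  simp only [mem_filter]
  constructor
  · exact fun h => ⟨h.1.1, h.2⟩
  · rintro ⟨hp, rfl⟩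
    exact ⟨⟨hp, hv⟩, rfl⟩

lemma eInc_mono {S X : Finset V} (hSX : S ⊆ X) : eInc E S ≤ eInc E X :=
  card_le_card (monotone_filter_right E fun _ _ hp => hSX hp)

variable [Fintype U]

lemma bideg_le_card_UX {X : Finset V} {v : V} (hv : v ∈ X) : bideg E v ≤ #(UX E X) := by
  refine card_le_card_of_injOn Prod.fst (fun p hp => ?_) fun p hp q hq h => ?_
  · simp only [coe_filter, Set.mem_ofPred_eq] at hp
    simp only [UX, coe_filter, mem_univ, true_and, Set.mem_ofPred_eq]
    exact ⟨v, hv, hp.2 ▸ hp.1⟩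
  · simp only [coe_filter, Set.mem_ofPred_eq] at hp hq
    exact Prod.ext h (hp.2.trans hq.2.symm)

lemma card_UX_le_eInc (X : Finset V) : #(UX E X) ≤ eInc E X := by
  have hUX : UX E X = (E.filter fun p => p.2 ∈ X).image Prod.fst := by
    ext u
    simp only [UX, mem_filter, mem_univ, true_and, mem_image]
    constructor
    · rintro ⟨v, hv, he⟩
      exact ⟨(u, v), ⟨he, hv⟩, rfl⟩
    · rintro ⟨p, hp, rfl⟩
      exact ⟨p.2, hp.2, hp.1⟩
  rw [hUX]
  exact card_image_le

end Bipartite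

namespace IsCore

variable {U V : Type} [Fintype U] [DecidableEq U] [DecidableEq V] {E : Finset (U × V)}
  {X S : Finset V} {ξ : ℝ}

lemma bideg_lt_of_eq_empty (hcore : IsCore E X S ξ) (hS : S = ∅) {v : V} (hv : v ∈ X) :
    (bideg E v : ℝ) < ξ * #(UX E X) := by
  by_contra! h
  simpa [hS] using hcore.2.1 v hv h

lemma card_mul_le_eInc (hcore : IsCore E X S ξ) :
    #S * (ξ * #(UX E X) / 24) ≤ (eInc E X : ℝ) :=
  calc #S * (ξ * #(UX E X) / 24) = ∑ _v ∈ S, ξ * #(UX E X) / 24 := by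
        rw [sum_const, nsmul_eq_mul]
    _ ≤ ∑ v ∈ S, (bideg E v : ℝ) := sum_le_sum hcore.2.2
    _ = eInc E S := by rw [eInc_eq_sum_bideg, Nat.cast_sum]
    _ ≤ eInc E X := by exact_mod_cast eInc_mono E hcore.1

lemma card_UX_le_of_witness (hcore : IsCore E X S ξ) (hξ : 0 < ξ) (hS : 24 / ξ ^ 2 ≤ #S) :
    (#(UX E X) : ℝ) ≤ ξ * eInc E X := by
  have hm : (0 : ℝ) ≤ #(UX E X) := Nat.cast_nonneg _
  calc (#(UX E X) : ℝ) = ξ * (24 / ξ ^ 2 * (ξ * #(UX E X) / 24)) := by field_simp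
    _ ≤ ξ * (#S * (ξ * #(UX E X) / 24)) := by gcongr
    _ ≤ ξ * eInc E X := by gcongr; exact hcore.card_mul_le_eInc

end IsCore

theorem stmt3_general {U V : Type} [Fintype U] [DecidableEq U] [DecidableEq V]
    (E : Finset (U × V)) (ξ : ℝ) (hξ0 : 0 < ξ)
    (X S : Finset V) (hcore : IsCore E X S ξ)
    (hwit : S = ∅ ∨ 24 / ξ ^ 2 ≤ (S.card : ℝ)) :
    ∀ v ∈ X, (bideg E v : ℝ) ≤ ξ * (eInc E X : ℝ) := by
  intro v hv
  have hUX : (#(UX E X) : ℝ) ≤ eInc E X := by exact_mod_cast card_UX_le_eInc E X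
  rcases hwit with hS | hS
  · calc (bideg E v : ℝ) ≤ ξ * #(UX E X) := (hcore.bideg_lt_of_eq_empty hS hv).le
      _ ≤ ξ * eInc E X := by gcongr
  · calc (bideg E v : ℝ) ≤ #(UX E X) := by exact_mod_cast bideg_le_card_UX E hv
      _ ≤ ξ * eInc E X := hcore.card_UX_le_of_witness hξ0 hS

/-- if `S` is a `ξ`-core of a nonempty `X ⊆ V` and `S` is a `ξ`-witness
(`S = ∅` or `|S| ≥ 24/ξ²`), then `X` is `ξ`-balanced: every vertex of `X` has degree
at most `ξ e(X)`. -/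
theorem stmt3 {U V : Type} [Fintype U] [Fintype V] [DecidableEq U] [DecidableEq V]
    (E : Finset (U × V)) (ξ : ℝ) (hξ0 : 0 < ξ) (hξ1 : ξ < 1)
    (X S : Finset V) (hX : X.Nonempty) (hcore : IsCore E X S ξ)
    (hwit : S = ∅ ∨ 24 / ξ ^ 2 ≤ (S.card : ℝ)) :
    ∀ v ∈ X, (bideg E v : ℝ) ≤ ξ * (eInc E X : ℝ) :=
  stmt3_general E ξ hξ0 X S hcore hwit
end

section
/- Let G be a bipartite graph with parts U and V, let ξ ∈ (0,1), let X ⊆ V be nonempty, and let S be a ξ-unbalancer of X (a ξ-core with 1 ≤ |S| < 24/ξ²). Then either X \ S contains no 48ξ-unbalancer, or |U_{X\S}| ≤ |U_X|/2. -/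
/-- `S` is a `ξ`-unbalancer of `X`: a `ξ`-core with `1 ≤ |S| < 24/ξ²`. -/
def IsUnbalancer {U V : Type} [Fintype U] [DecidableEq U] [DecidableEq V] (E : Finset (U × V))
    (X S : Finset V) (ξ : ℝ) : Prop :=
  IsCore E X S ξ ∧ 1 ≤ S.card ∧ (S.card : ℝ) < 24 / ξ ^ 2

/-- if `S` is a `ξ`-unbalancer of a nonempty `X ⊆ V`, then either `X \ S`
contains no `48ξ`-unbalancer, or `|U_{X\S}| ≤ |U_X|/2`. -/
theorem stmt4 {U V : Type} [Fintype U] [Fintype V] [DecidableEq U] [DecidableEq V]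
    (E : Finset (U × V)) (ξ : ℝ) (hξ0 : 0 < ξ) (hξ1 : ξ < 1)
    (X S : Finset V) (hX : X.Nonempty) (hS : IsUnbalancer E X S ξ) :
    (¬ ∃ S', IsUnbalancer E (X \ S) S' (48 * ξ)) ∨
      ((UX E (X \ S)).card : ℝ) ≤ ((UX E X).card : ℝ) / 2 := by
  by_cases h : ∃ S', IsUnbalancer E (X \ S) S' (48 * ξ)
  · right
    obtain ⟨S', ⟨hsub, hin, hlow⟩, hcard, _⟩ := h
    obtain ⟨v, hv⟩ := Finset.card_pos.mp hcard
    have hvX : v ∈ X \ S := hsub hv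
    have hvX' : v ∈ X := (Finset.mem_sdiff.mp hvX).1
    have hvS : v ∉ S := (Finset.mem_sdiff.mp hvX).2
    have hlt : (bideg E v : ℝ) < ξ * ((UX E X).card : ℝ) := by
      by_contra hc
      exact hvS (hS.1.2.1 v hvX' (le_of_not_gt hc))
    have hge : 48 * ξ * ((UX E (X \ S)).card : ℝ) / 24 ≤ (bideg E v : ℝ) := hlow v hv
    nlinarith [hge.trans_lt hlt]
  · exact Or.inl h
end

section
/- Let A be an (s,m,n)-hash and let b ∈ GF(2)^m be uniformly random and independent of A. Then for all x,y ∈ GF(2)^n, P((Ax)_i = (Ay)_i = b_i) = (1 + P(x_{R_i} = y_{R_i}))/4, where R_i is the random support set of row i and x_{R_i} denotes the projection of x to coordinates in R_i. -/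
open Finset

lemma prod_ite_pt {α M : Type*} [Fintype α] [DecidableEq α] [CommMonoid M] (i : α) (a b : M) :
    ∏ k : α, (if k = i then a else b) = a * b ^ (Fintype.card α - 1) := by
  rw [Finset.prod_eq_mul_prod_sdiff_singleton_of_mem (Finset.mem_univ i)
    (fun k => if k = i then a else b)]
  rw [if_pos rfl]
  congr 1
  rw [Finset.prod_congr rfl (fun k hk => if_neg (by simpa using (Finset.mem_sdiff.1 hk).2)),
    Finset.prod_const]
  congr 1
  rw [Finset.card_sdiff_of_subset (by simp)]
  simp

lemma supp_card {n : ℕ} (R : Finset (Fin n)) :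
    (univ.filter (fun a : Fin n → ZMod 2 => ∀ j ∉ R, a j = 0)).card = 2 ^ R.card := by
  have h : (univ.filter (fun a : Fin n → ZMod 2 => ∀ j ∉ R, a j = 0))
      = Fintype.piFinset (fun j => if j ∈ R then (univ : Finset (ZMod 2)) else {0}) := by
    ext a
    simp only [mem_filter, mem_univ, true_and, Fintype.mem_piFinset]
    constructor
    · intro h j
      by_cases hj : j ∈ R
      · simp [hj]
      · simp [hj, h j hj]
    · intro h j hj
      have := h j
      simpa [hj] using this
  rw [h, Fintype.card_piFinset]
  calc (∏ j : Fin n, (if j ∈ R then (univ : Finset (ZMod 2)) else {0}).card)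
      = ∏ j : Fin n, (if j ∈ R then 2 else 1) := by
        refine Finset.prod_congr rfl fun j _ => ?_
        by_cases hj : j ∈ R <;> simp [hj]
    _ = 2 ^ R.card := by
        rw [Finset.prod_ite_mem, Finset.univ_inter, Finset.prod_const]
lemma flip_sum {n : ℕ} (a d : Fin n → ZMod 2) (j0 : Fin n) :
    ∑ j, Function.update a j0 (a j0 + 1) j * d j = (∑ j, a j * d j) + d j0 := by
  have h : ∀ j, Function.update a j0 (a j0 + 1) j * d j
      = a j * d j + (if j = j0 then d j0 else 0) := by
    intro j
    by_cases hj : j = j0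
    · subst hj; simp [Function.update_self]; ring
    · simp [Function.update_of_ne hj, hj]
  rw [Finset.sum_congr rfl (fun j _ => h j), Finset.sum_add_distrib,
    Finset.sum_ite_eq' univ j0 (fun _ => d j0)]
  simp

lemma half_card {n : ℕ} (R : Finset (Fin n)) (d : Fin n → ZMod 2) (j0 : Fin n)
    (hj0 : j0 ∈ R) (hd : d j0 ≠ 0) :
    2 * (univ.filter (fun a : Fin n → ZMod 2 =>
        (∀ j ∉ R, a j = 0) ∧ ∑ j, a j * d j = 0)).card = 2 ^ R.card := by
  have hd1 : d j0 = 1 := by revert hd; generalize d j0 = z; revert z; decide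
  set S0 := univ.filter (fun a : Fin n → ZMod 2 => (∀ j ∉ R, a j = 0) ∧ ∑ j, a j * d j = 0)
    with hS0
  set S1 := univ.filter (fun a : Fin n → ZMod 2 => (∀ j ∉ R, a j = 0) ∧ ∑ j, a j * d j = 1)
    with hS1
  have flipmem : ∀ (a : Fin n → ZMod 2) (c : ZMod 2), (∀ j ∉ R, a j = 0) → ∑ j, a j * d j = c →
      (∀ j ∉ R, Function.update a j0 (a j0 + 1) j = 0) ∧
        ∑ j, Function.update a j0 (a j0 + 1) j * d j = c + 1 := by
    intro a c hsupp hsum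
    constructor
    · intro j hj
      have hne : j ≠ j0 := fun h => hj (h ▸ hj0)
      rw [Function.update_of_ne hne]; exact hsupp j hj
    · rw [flip_sum, hsum, hd1]
  have hinv : ∀ a : Fin n → ZMod 2,
      Function.update (Function.update a j0 (a j0 + 1)) j0
        (Function.update a j0 (a j0 + 1) j0 + 1) = a := by
    intro a
    rw [Function.update_idem, Function.update_self]
    have : a j0 + 1 + 1 = a j0 := by generalize a j0 = z; revert z; decide
    rw [this, Function.update_eq_self]
  have hcard : S0.card = S1.card := by
    refine Finset.card_bij' (fun a _ => Function.update a j0 (a j0 + 1))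
      (fun a _ => Function.update a j0 (a j0 + 1)) ?_ ?_ ?_ ?_
    · intro a ha
      simp only [hS0, hS1, mem_filter, mem_univ, true_and] at ha ⊢
      have := flipmem a 0 ha.1 ha.2
      simpa using this
    · intro a ha
      simp only [hS0, hS1, mem_filter, mem_univ, true_and] at ha ⊢
      have := flipmem a 1 ha.1 ha.2
      have h2 : (1 : ZMod 2) + 1 = 0 := by decide
      rw [h2] at this
      exact this
    · intro a _; exact hinv a
    · intro a _; exact hinv a
  have h1 : ∀ z : ZMod 2, ¬ z = 0 ↔ z = 1 := by decide
  have e0 : S0 = (univ.filter (fun a : Fin n → ZMod 2 => ∀ j ∉ R, a j = 0)).filter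
      (fun a => ∑ j, a j * d j = 0) := by
    rw [Finset.filter_filter]
  have e1 : S1 = (univ.filter (fun a : Fin n → ZMod 2 => ∀ j ∉ R, a j = 0)).filter
      (fun a => ¬ (∑ j, a j * d j = 0)) := by
    rw [Finset.filter_filter]
    ext a
    simp only [hS1, mem_filter, mem_univ, true_and]
    constructor
    · rintro ⟨hsupp, hsum⟩
      exact ⟨hsupp, by rw [hsum]; decide⟩
    · rintro ⟨hsupp, hsum⟩
      exact ⟨hsupp, (h1 _).1 hsum⟩
  have hsplit : S0.card + S1.card
      = (univ.filter (fun a : Fin n → ZMod 2 => ∀ j ∉ R, a j = 0)).card := by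
    rw [e0, e1]
    exact Finset.card_filter_add_card_filter_not _
  calc 2 * S0.card = S0.card + S1.card := by rw [hcard, two_mul]
    _ = _ := hsplit
    _ = 2 ^ R.card := supp_card R
lemma filter_card_eq_powersetCard {n s : ℕ} :
    (univ : Finset (Finset (Fin n))).filter (fun R => R.card = s) = univ.powersetCard s := by
  ext R
  simp [Finset.mem_powersetCard_univ]

lemma rowSet_card {n : ℕ} (s : ℕ) :
    (univ.filter (fun r : Finset (Fin n) × (Fin n → ZMod 2) =>
      r.1.card = s ∧ ∀ j ∉ r.1, r.2 j = 0)).card = n.choose s * 2 ^ s := by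
  rw [Finset.card_filter, Fintype.sum_prod_type]
  have hinner : ∀ R : Finset (Fin n),
      (∑ a : Fin n → ZMod 2, if R.card = s ∧ ∀ j ∉ R, a j = 0 then 1 else 0)
      = if R.card = s then 2 ^ s else 0 := by
    intro R
    by_cases hR : R.card = s
    · rw [if_pos hR, ← hR, ← supp_card R, Finset.card_filter]
      refine Finset.sum_congr rfl fun a _ => by simp [hR]
    · rw [if_neg hR]
      refine Finset.sum_eq_zero fun a _ => by simp [hR]
  rw [Finset.sum_congr rfl (fun R _ => hinner R), Finset.sum_ite, Finset.sum_const,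
    Finset.sum_const, filter_card_eq_powersetCard, Finset.card_powersetCard]
  simp [mul_comm]

lemma rowSet'_card {n : ℕ} (s : ℕ) (hs : 0 < s) (x y : Fin n → ZMod 2) :
    (univ.filter (fun r : Finset (Fin n) × (Fin n → ZMod 2) =>
      (r.1.card = s ∧ ∀ j ∉ r.1, r.2 j = 0) ∧ ∑ j, r.2 j * x j = ∑ j, r.2 j * y j)).card
    = (n.choose s + ((univ.powersetCard s).filter (fun R => ∀ j ∈ R, x j = y j)).card)
        * 2 ^ (s - 1) := by
  have hsumiff : ∀ a : Fin n → ZMod 2,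
      (∑ j, a j * x j = ∑ j, a j * y j) ↔ ∑ j, a j * (x j - y j) = 0 := by
    intro a
    rw [← sub_eq_zero, ← Finset.sum_sub_distrib]
    simp [mul_sub]
  rw [Finset.card_filter, Fintype.sum_prod_type]
  have hinner : ∀ R : Finset (Fin n),
      (∑ a : Fin n → ZMod 2, if (R.card = s ∧ ∀ j ∉ R, a j = 0)
          ∧ ∑ j, a j * x j = ∑ j, a j * y j then 1 else 0)
      = if R.card = s then (if ∀ j ∈ R, x j = y j then 2 ^ s else 2 ^ (s - 1)) else 0 := by
    intro R
    by_cases hR : R.card = s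
    · rw [if_pos hR]
      by_cases hag : ∀ j ∈ R, x j = y j
      · rw [if_pos hag, ← hR, ← supp_card R, Finset.card_filter]
        refine Finset.sum_congr rfl fun a _ => ?_
        by_cases hsupp : ∀ j ∉ R, a j = 0
        · have hsum : ∑ j, a j * (x j - y j) = 0 := by
            refine Finset.sum_eq_zero fun j _ => ?_
            by_cases hj : j ∈ R
            · rw [sub_eq_zero.2 (hag j hj), mul_zero]
            · rw [hsupp j hj, zero_mul]
          simp [hR, hsupp, (hsumiff a).2 hsum]
        · simp [hsupp]
      · rw [if_neg hag]
        push_neg at hag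
        obtain ⟨j0, hj0, hne⟩ := hag
        have hhalf := half_card R (fun j => x j - y j) j0 hj0 (sub_ne_zero.2 hne)
        rw [hR] at hhalf
        have h2 : (2:ℕ) ^ s = 2 * 2 ^ (s - 1) := by
          obtain ⟨t, rfl⟩ : ∃ t, s = t + 1 := ⟨s - 1, (Nat.succ_pred_eq_of_pos hs).symm⟩
          rw [Nat.add_sub_cancel, pow_succ']
        have hcc : (univ.filter (fun a : Fin n → ZMod 2 =>
            (∀ j ∉ R, a j = 0) ∧ ∑ j, a j * (x j - y j) = 0)).card = 2 ^ (s-1) :=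
          Nat.eq_of_mul_eq_mul_left two_pos (hhalf.trans h2)
        rw [← hcc, Finset.card_filter]
        refine Finset.sum_congr rfl fun a _ => ?_
        congr 1
        simp only [eq_iff_iff]
        rw [hsumiff a]
        tauto
    · rw [if_neg hR]
      refine Finset.sum_eq_zero fun a _ => by simp [hR]
  rw [Finset.sum_congr rfl (fun R _ => hinner R), Finset.sum_ite, Finset.sum_const,
    smul_zero, add_zero, filter_card_eq_powersetCard]
  have h2 : (2:ℕ) ^ s = 2 ^ (s-1) + 2 ^ (s-1) := by
    obtain ⟨t, rfl⟩ : ∃ t, s = t + 1 := ⟨s - 1, (Nat.succ_pred_eq_of_pos hs).symm⟩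
    rw [Nat.add_sub_cancel, pow_succ, mul_two]
  have hterm : ∀ R : Finset (Fin n), (if ∀ j ∈ R, x j = y j then (2:ℕ)^s else 2^(s-1))
      = 2^(s-1) + (if ∀ j ∈ R, x j = y j then 2^(s-1) else 0) := fun R => by
    by_cases h : ∀ j ∈ R, x j = y j
    · rw [if_pos h, if_pos h, h2]
    · rw [if_neg h, if_neg h, add_zero]
  rw [Finset.sum_congr rfl (fun R _ => hterm R), Finset.sum_add_distrib, Finset.sum_const,
    Finset.sum_ite, Finset.sum_const, Finset.sum_const, smul_zero, add_zero,
    Finset.card_powersetCard, Finset.card_univ, Fintype.card_fin]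
  simp [add_mul]
lemma countB {m : ℕ} (i : Fin m) (c : ZMod 2) :
    (univ.filter (fun b : Fin m → ZMod 2 => b i = c)).card = 2 ^ (m - 1) := by
  have h : (univ.filter (fun b : Fin m → ZMod 2 => b i = c))
      = Fintype.piFinset (fun k => if k = i then ({c} : Finset (ZMod 2)) else univ) := by
    ext b
    simp only [mem_filter, mem_univ, true_and, Fintype.mem_piFinset]
    constructor
    · intro hb k
      by_cases hk : k = i
      · subst hk; simp [hb]
      · simp [hk]
    · intro hb
      have := hb i
      simpa using this
  rw [h, Fintype.card_piFinset]
  have : ∀ k : Fin m, (if k = i then ({c} : Finset (ZMod 2)) else univ).card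
      = if k = i then 1 else 2 := by
    intro k; by_cases hk : k = i <;> simp [hk]
  rw [Finset.prod_congr rfl (fun k _ => this k), prod_ite_pt i 1 2]
  simp

lemma piFinset_ite_card {m : ℕ} {β : Type*} [DecidableEq β] (i : Fin m) (t1 t2 : Finset β) :
    (Fintype.piFinset (fun k : Fin m => if k = i then t1 else t2)).card
      = t1.card * t2.card ^ (m - 1) := by
  rw [Fintype.card_piFinset]
  have : ∀ k : Fin m, (if k = i then t1 else t2).card = if k = i then t1.card else t2.card := by
    intro k; by_cases hk : k = i <;> simp [hk]
  rw [Finset.prod_congr rfl (fun k _ => this k), prod_ite_pt i t1.card t2.card]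
  simp


/-- The (finite, uniform) sample space of an `(s,m,n)`-hash together with an independent uniform
vector `b ∈ GF(2)^m`: an outcome consists of, for each row `i ∈ [m]`, a size-`s` support set
`R_i ⊆ [n]` together with a row vector supported on `R_i` (whose entries on `R_i` are uniform
independent bits), and of the vector `b`.  The uniform distribution on this set is exactly the
hash distribution, since each support set carries the same number `2^s` of row vectors. -/
def hashΩ (s m n : ℕ) :
    Finset ((Fin m → Finset (Fin n) × (Fin n → ZMod 2)) × (Fin m → ZMod 2)) :=
  Finset.univ.filter
    (fun ω => ∀ i, (ω.1 i).1.card = s ∧ ∀ j, j ∉ (ω.1 i).1 → (ω.1 i).2 j = 0)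

/-- for an `(s,m,n)`-hash `A` and an independent uniform `b ∈ GF(2)^m`, for all
`x, y ∈ GF(2)^n` and every row `i`, `P((Ax)_i = (Ay)_i = b_i) = (1 + P(x_{R_i} = y_{R_i}))/4`,
where `P(x_{R_i} = y_{R_i})` is the probability that `x` and `y` agree on the uniformly random
size-`s` support set `R_i` of row `i`. -/
theorem stmt6 (s m n : ℕ) (hs : 0 < s) (hsn : s ≤ n) (hm : 0 < m)
    (x y : Fin n → ZMod 2) (i : Fin m) :
    (((hashΩ s m n).filter (fun ω =>
          (∑ j, (ω.1 i).2 j * x j = ω.2 i) ∧ (∑ j, (ω.1 i).2 j * y j = ω.2 i))).card : ℝ)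
        / ((hashΩ s m n).card : ℝ)
      = (1 + ((((Finset.univ : Finset (Fin n)).powersetCard s).filter
            (fun R => ∀ j ∈ R, x j = y j)).card : ℝ)
          / (((Finset.univ : Finset (Fin n)).powersetCard s).card : ℝ)) / 4 := by
  classical
  set rowSet : Finset (Finset (Fin n) × (Fin n → ZMod 2)) :=
    univ.filter (fun r => r.1.card = s ∧ ∀ j ∉ r.1, r.2 j = 0) with hrowSet
  set rowSet' : Finset (Finset (Fin n) × (Fin n → ZMod 2)) := univ.filter (fun r =>
      (r.1.card = s ∧ ∀ j ∉ r.1, r.2 j = 0) ∧ ∑ j, r.2 j * x j = ∑ j, r.2 j * y j)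
    with hrowSet'
  have hΩ : hashΩ s m n = (Fintype.piFinset fun _ : Fin m => rowSet) ×ˢ
      (univ : Finset (Fin m → ZMod 2)) := by
    ext ω
    simp only [hashΩ, mem_filter, mem_univ, true_and, Finset.mem_product,
      Fintype.mem_piFinset, hrowSet, and_true]
  have hden : (hashΩ s m n).card = (n.choose s * 2 ^ s) ^ m * 2 ^ m := by
    rw [hΩ, Finset.card_product, Fintype.card_piFinset, Finset.prod_const,
      Finset.card_univ, Finset.card_univ]
    rw [hrowSet, rowSet_card s]
    simp [Fintype.card_fun]
  have hnum : ((hashΩ s m n).filter (fun ω =>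
        (∑ j, (ω.1 i).2 j * x j = ω.2 i) ∧ (∑ j, (ω.1 i).2 j * y j = ω.2 i))).card
      = rowSet'.card * rowSet.card ^ (m - 1) * 2 ^ (m - 1) := by
    rw [hΩ, Finset.card_filter, Finset.sum_product]
    have hinner : ∀ f : Fin m → Finset (Fin n) × (Fin n → ZMod 2),
        (∑ b : Fin m → ZMod 2, if (∑ j, (f i).2 j * x j = b i)
            ∧ (∑ j, (f i).2 j * y j = b i) then 1 else 0)
        = if (∑ j, (f i).2 j * x j = ∑ j, (f i).2 j * y j) then 2 ^ (m-1) else 0 := by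
      intro f
      rw [← Finset.card_filter]
      by_cases hf : ∑ j, (f i).2 j * x j = ∑ j, (f i).2 j * y j
      · rw [if_pos hf, ← countB i (∑ j, (f i).2 j * x j)]
        congr 1
        ext b
        simp only [mem_filter, mem_univ, true_and]
        constructor
        · rintro ⟨h1, h2⟩; exact h1.symm
        · intro h; exact ⟨h.symm, hf ▸ h.symm⟩
      · rw [if_neg hf]
        have hemp : (univ.filter (fun b : Fin m → ZMod 2 =>
            (∑ j, (f i).2 j * x j = b i) ∧ (∑ j, (f i).2 j * y j = b i))) = ∅ := by
          rw [Finset.filter_eq_empty_iff]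
          rintro b - ⟨h1, h2⟩
          exact hf (h1.trans h2.symm)
        rw [hemp, Finset.card_empty]
    rw [Finset.sum_congr rfl (fun f _ => hinner f), ← Finset.sum_filter,
      Finset.sum_const, smul_eq_mul]
    have hfil : (Fintype.piFinset fun _ : Fin m => rowSet).filter
        (fun f => ∑ j, (f i).2 j * x j = ∑ j, (f i).2 j * y j)
        = Fintype.piFinset (fun k => if k = i then rowSet' else rowSet) := by
      ext f
      simp only [mem_filter, Fintype.mem_piFinset]
      constructor
      · rintro ⟨hall, hcond⟩ k
        by_cases hk : k = i
        · subst hk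
          rw [if_pos rfl, hrowSet', mem_filter]
          have := hall k
          rw [hrowSet, mem_filter] at this
          exact ⟨mem_univ _, this.2, hcond⟩
        · rw [if_neg hk]; exact hall k
      · intro hall
        constructor
        · intro k
          by_cases hk : k = i
          · subst hk
            have := hall k
            rw [if_pos rfl, hrowSet', mem_filter] at this
            rw [hrowSet, mem_filter]
            exact ⟨mem_univ _, this.2.1⟩
          · have := hall k
            rwa [if_neg hk] at this
        · have := hall i
          rw [if_pos rfl, hrowSet', mem_filter] at this
          exact this.2.2
    rw [hfil, piFinset_ite_card]
  rw [hnum, hden, hrowSet, hrowSet', rowSet_card s, rowSet'_card s hs x y,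
    Finset.card_powersetCard, Finset.card_univ, Fintype.card_fin]
  set N := (((Finset.univ : Finset (Fin n)).powersetCard s).filter
      (fun R => ∀ j ∈ R, x j = y j)).card with hN
  have hC : 0 < n.choose s := Nat.choose_pos hsn
  obtain ⟨t, rfl⟩ : ∃ t, s = t + 1 := ⟨s - 1, (Nat.succ_pred_eq_of_pos hs).symm⟩
  obtain ⟨u, rfl⟩ : ∃ u, m = u + 1 := ⟨m - 1, (Nat.succ_pred_eq_of_pos hm).symm⟩
  simp only [Nat.add_sub_cancel]
  have hCr : (0:ℝ) < (n.choose (t+1) : ℝ) := by exact_mod_cast hC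
  push_cast
  rw [pow_succ, pow_succ]
  field_simp
  ring
end

section
/- Let h : [0,1] → [0,1] be the binary entropy function h(δ) = −δ lg δ − (1−δ) lg(1−δ), with left inverse h⁻¹ : [0,1] → [0,1/2]. Then for all δ with 0 < δ < 1/6, h⁻¹(δ) ≥ δ/(2 lg(6/δ)). -/
/-!
Since `h` is strictly increasing on `[0, 1/2]`, it suffices to show `h(β) ≤ δ` for
`β = δ / (2 L)`, `L = lg (6/δ)`. Bounding `(1-β) ln (1/(1-β)) ≤ β` gives `h(β) ≤ β lg (e/β)`,
and `e/β = e L (6/δ) / 3 ≤ (6/δ)²` because `e ln u ≤ u` and `ln 2 > 1/3`; hence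
`h(β) ≤ β · 2L = δ`.
-/

/-- The binary entropy function `h(x) = -x lg x - (1-x) lg (1-x)` (base-2 logarithms). -/
noncomputable def binEnt (x : ℝ) : ℝ := -x * Real.logb 2 x - (1 - x) * Real.logb 2 (1 - x)

lemma binEnt_eq_binEntropy_div_log_two (x : ℝ) : binEnt x = Real.binEntropy x / Real.log 2 := by
  simp only [binEnt, Real.binEntropy, Real.logb, Real.log_inv]
  ring

namespace Real

lemma binEntropy_le_mul_log_inv_add_one {p : ℝ} (hp : p < 1) :
    binEntropy p ≤ p * (log p⁻¹ + 1) := by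
  have hq : 0 < 1 - p := by linarith
  have hlog : log (1 - p)⁻¹ ≤ (1 - p)⁻¹ - 1 := log_le_sub_one_of_pos (inv_pos.2 hq)
  have hq_term : (1 - p) * log (1 - p)⁻¹ ≤ p :=
    calc (1 - p) * log (1 - p)⁻¹ ≤ (1 - p) * ((1 - p)⁻¹ - 1) :=
          mul_le_mul_of_nonneg_left hlog hq.le
      _ = p := by field_simp; ring
  rw [binEntropy]
  linarith

lemma exp_one_mul_logb_two_le {u : ℝ} (hu : 0 < u) : exp 1 * logb 2 u ≤ 3 * u := by
  have hlog2 : 1 / 3 < log 2 := by linarith [log_two_gt_d9]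
  have hu_log : exp 1 * log u ≤ u := by simpa [exp_log hu] using exp_one_mul_le_exp (x := log u)
  rw [logb, mul_div_assoc', div_le_iff₀ (by linarith)]
  nlinarith

lemma one_le_logb_two_six_div {δ : ℝ} (hδ0 : 0 < δ) (hδ3 : δ ≤ 3) : 1 ≤ logb 2 (6 / δ) := by
  rw [le_logb_iff_rpow_le one_lt_two (by positivity), rpow_one, le_div_iff₀ hδ0]
  linarith

lemma binEntropy_div_two_logb_two_six_div_le {δ : ℝ} (hδ0 : 0 < δ) (hδ1 : δ ≤ 1) :
    binEntropy (δ / (2 * logb 2 (6 / δ))) ≤ δ * log 2 := by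
  set u := 6 / δ with hu_def
  set L := logb 2 u
  set β := δ / (2 * L)
  have hu : 0 < u := by positivity
  have hL1 : 1 ≤ L := one_le_logb_two_six_div hδ0 (by linarith)
  have hL : 0 < L := by linarith
  have hβ1 : β < 1 := by
    rw [div_lt_one (by positivity)]
    linarith
  have hlogu : log u = L * log 2 := (div_mul_cancel₀ _ (log_pos one_lt_two).ne').symm
  have hexp_div : exp 1 / β ≤ u ^ 2 := by
    have hβ_inv : exp 1 / β = exp 1 * L * u / 3 := by
      simp only [β, hu_def]
      field_simp
      ring
    rw [hβ_inv, div_le_iff₀ (by norm_num)]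
    nlinarith [exp_one_mul_logb_two_le hu]
  have hlog_bound : log β⁻¹ + 1 ≤ 2 * L * log 2 :=
    calc log β⁻¹ + 1 = log (exp 1 / β) := by
          rw [div_eq_mul_inv, log_mul (exp_pos 1).ne' (by positivity), log_exp, add_comm]
      _ ≤ log (u ^ 2) := log_le_log (by positivity) hexp_div
      _ = 2 * L * log 2 := by rw [log_pow, hlogu]; push_cast; ring
  calc binEntropy β ≤ β * (log β⁻¹ + 1) := binEntropy_le_mul_log_inv_add_one hβ1
    _ ≤ β * (2 * L * log 2) := mul_le_mul_of_nonneg_left hlog_bound (by positivity)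
    _ = δ * log 2 := by simp only [β]; field_simp

end Real

/-- for `0 < δ < 1/6`, the left inverse of the binary entropy function satisfies
`h⁻¹(δ) ≥ δ / (2 lg (6/δ))`; i.e. if `α ∈ [0, 1/2]` satisfies `h(α) = δ` then
`α ≥ δ / (2 lg (6/δ))`. -/
theorem stmt8 (δ α : ℝ) (hδ0 : 0 < δ) (hδ : δ < 1 / 6)
    (hα : α ∈ Set.Icc (0 : ℝ) (1 / 2)) (hinv : binEnt α = δ) :
    δ / (2 * Real.logb 2 (6 / δ)) ≤ α := by
  have hL := Real.one_le_logb_two_six_div hδ0 (by linarith)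
  have hα_ent : Real.binEntropy α = δ * Real.log 2 := by
    rw [← hinv, binEnt_eq_binEntropy_div_log_two,
      div_mul_cancel₀ _ (Real.log_pos one_lt_two).ne']
  have hβ_mem : δ / (2 * Real.logb 2 (6 / δ)) ∈ Set.Icc (0 : ℝ) 2⁻¹ := by
    refine ⟨by positivity, ?_⟩
    rw [div_le_iff₀ (by positivity)]
    linarith
  by_contra! hlt
  have hmono := Real.binEntropy_strictMonoOn ⟨hα.1, by linarith [hα.2]⟩ hβ_mem hlt
  linarith [Real.binEntropy_div_two_logb_two_six_div_le hδ0 (by linarith : δ ≤ 1)]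
end

section
/- Let G' be the layered graph on vertex set V × {1,2,3} built from an edge-weighted graph (G,w) by, for each edge {u,v} of G and each i ∈ {1,2}, adding edges {(u,i),(v,i+1)} and {(v,i),(u,i+1)} of weight w(u,v). Then for every edge {u,v} ∈ E(G), the minimum over paths from (u,1) to (v,3) in G' of the path weight equals the minimum over vertices c with {u,c},{c,v} ∈ E(G) of w(u,c) + w(c,v); consequently, G contains a triangle of negative total weight if and only if there exists {u,v} ∈ E(G) such that dist_{G'}((u,1),(v,3)) + w(u,v) < 0. -/
/-- The layered (directed, layer-increasing) adjacency of the graph `G'` on `V × {1,2,3}`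
(layers indexed by `Fin 3`): for each edge `{a,b}` of `G` and each pair of consecutive layers,
`(a,i)` is joined to `(b,i+1)`. -/
def LAdj {V : Type} (G : SimpleGraph V) (p q : V × Fin 3) : Prop :=
  G.Adj p.1 q.1 ∧ ((p.2 = 0 ∧ q.2 = 1) ∨ (p.2 = 1 ∧ q.2 = 2))

/-- Total weight of a path in `G'`, given as its list of vertices: the sum of `w` over
consecutive pairs; each edge `{(a,i),(b,i+1)}` has weight `w a b`. -/
def listWeight {V : Type} (w : V → V → ℤ) : List (V × Fin 3) → ℤ
  | a :: b :: rest => w a.1 b.1 + listWeight w (b :: rest)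
  | _ => 0

/-- The set of weights of paths in `G'` from `(u,1)` to `(v,3)` (here layers `0` and `2` of
`Fin 3`): lists of vertices starting at `(u,0)`, ending at `(v,2)`, whose consecutive pairs
are adjacent in `G'`. -/
def pathWeights {V : Type} (G : SimpleGraph V) (w : V → V → ℤ) (u v : V) : Set ℤ :=
  {x | ∃ l : List (V × Fin 3), l.Chain' (LAdj G) ∧ l.head? = some (u, 0) ∧
        l.getLast? = some (v, 2) ∧ x = listWeight w l}

/-!
Layers increase by exactly one along every edge of `G'`, so a path from layer `0` to layer `2`
has exactly three vertices `(u,0), (c,1), (v,2)`, and its weight is `w u c + w c v` for a common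
neighbour `c`. Hence the path weights from `(u,0)` to `(v,2)` are precisely the weights of the
two-edge paths `u – c – v` in `G`, a finite set, and adding `w u v` closes them into triangles.
-/

variable {V : Type} {G : SimpleGraph V}

lemma LAdj.layer_succ {p q : V × Fin 3} (h : LAdj G p q) : (q.2 : ℕ) = p.2 + 1 := by
  rcases h with ⟨-, ⟨hp, hq⟩ | ⟨hp, hq⟩⟩ <;> simp [hp, hq]

lemma layer_getLast_of_isChain {a : V × Fin 3} {l : List (V × Fin 3)}
    (h : (a :: l).IsChain (LAdj G)) :
    (((a :: l).getLast (List.cons_ne_nil a l)).2 : ℕ) = a.2 + l.length := by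
  induction l generalizing a with
  | nil => simp
  | cons b l ih =>
    rw [List.isChain_cons_cons] at h
    rw [List.getLast_cons_cons, ih h.2, h.1.layer_succ, List.length_cons]
    omega

lemma mem_pathWeights_iff {w : V → V → ℤ} {u v : V} {x : ℤ} :
    x ∈ pathWeights G w u v ↔ ∃ c, G.Adj u c ∧ G.Adj c v ∧ x = w u c + w c v := by
  constructor
  · rintro ⟨_ | ⟨a, l⟩, (hchain : List.IsChain _ _), hhead, hlast, rfl⟩
    · simp at hhead
    obtain rfl : a = (u, 0) := by simpa using hhead
    rw [List.getLast?_eq_some_getLast (List.cons_ne_nil _ _), Option.some_inj] at hlast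
    have hlen : l.length = 2 := by
      simpa [hlast] using (layer_getLast_of_isChain hchain).symm
    obtain ⟨b, c, rfl⟩ := List.length_eq_two.mp hlen
    obtain rfl : c = (v, 2) := by simpa using hlast
    simp only [List.isChain_cons_cons, List.isChain_singleton, and_true] at hchain
    exact ⟨b.1, hchain.1.1, hchain.2.1, by simp [listWeight]⟩
  · rintro ⟨c, huc, hcv, rfl⟩
    refine ⟨[(u, 0), (c, 1), (v, 2)], ?_, rfl, rfl, by simp [listWeight]⟩
    exact List.isChain_cons_cons.mpr ⟨⟨huc, by simp⟩, List.isChain_pair.mpr ⟨hcv, by simp⟩⟩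

lemma pathWeights_eq (w : V → V → ℤ) (u v : V) :
    pathWeights G w u v = {x : ℤ | ∃ c, G.Adj u c ∧ G.Adj c v ∧ x = w u c + w c v} :=
  Set.ext fun _ => mem_pathWeights_iff

lemma pathWeights_finite [Finite V] (w : V → V → ℤ) (u v : V) :
    (pathWeights G w u v).Finite :=
  (Set.finite_range fun c => w u c + w c v).subset fun _ hx => by
    obtain ⟨c, -, -, rfl⟩ := mem_pathWeights_iff.mp hx
    exact ⟨c, rfl⟩

/-- in the layered graph `G'` built from an edge-weighted graph `(G, w)`
(`w` symmetric), for every edge `{u,v}` of `G` the minimum weight of a path from `(u,1)` to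
`(v,3)` equals the minimum of `w u c + w c v` over common neighbours `c` of `u` and `v`;
consequently `G` has a negative-weight triangle iff there is an edge `{u,v}` with
`dist_{G'}((u,1),(v,3)) + w u v < 0` (the distance being `+∞`, i.e. the condition failing,
when no such path exists). -/
theorem stmt19 {V : Type} [Fintype V] (G : SimpleGraph V) (w : V → V → ℤ)
    (hw : ∀ a b, w a b = w b a) :
    (∀ u v, G.Adj u v →
        sInf (pathWeights G w u v)
          = sInf {x : ℤ | ∃ c, G.Adj u c ∧ G.Adj c v ∧ x = w u c + w c v}) ∧
      ((∃ a b c, G.Adj a b ∧ G.Adj b c ∧ G.Adj c a ∧ w a b + w b c + w c a < 0) ↔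
        ∃ u v, G.Adj u v ∧ (pathWeights G w u v).Nonempty ∧
          sInf (pathWeights G w u v) + w u v < 0) := by
  refine ⟨fun u v _ => by rw [pathWeights_eq], ⟨?_, ?_⟩⟩
  · rintro ⟨a, b, c, hab, hbc, hca, hneg⟩
    have hmem : w a b + w b c ∈ pathWeights G w a c := mem_pathWeights_iff.mpr ⟨b, hab, hbc, rfl⟩
    have hle := csInf_le (pathWeights_finite w a c).bddBelow hmem
    refine ⟨a, c, hca.symm, ⟨_, hmem⟩, ?_⟩
    linarith [hw a c]
  · rintro ⟨u, v, huv, hne, hlt⟩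
    obtain ⟨c, huc, hcv, hmin⟩ := mem_pathWeights_iff.mp (hne.csInf_mem (pathWeights_finite w u v))
    refine ⟨u, c, v, huc, hcv, huv.symm, ?_⟩
    linarith [hw v u]
end
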